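/- Let K carry a proper set of absolute values M_K with algebraic closure K̄, let X be a projective scheme over K̄ with diagonal Δ_X ⊆ X × X avoiding Ass(X × X), and fix an arithmetic distance function δ_X = λ_{Δ_X}. Then there exists an M_K-constant γ such that δ_X(x,z,v) + γ(v) ≥ min{δ_X(x,y,v), δ_X(y,z,v)} for all x,y,z ∈ X(K̄) and v ∈ M(K̄). -/

import Mathlib

/-!
For the standard distance, the inequality comes from the identity
`y_k (x_i z_j - x_j z_i) = z_j (x_i y_k - x_k y_i) - z_i (x_j y_k - x_k y_j) + x_k (y_i z_j - y_j z_i)`,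
a quantitative form of `pr₁₂⁻¹ Δ ∩ pr₂₃⁻¹ Δ ⊆ pr₁₃⁻¹ Δ`. It bounds `‖y‖ ‖x ∧ z‖` by
`C_v · max (‖z‖ ‖x ∧ y‖, ‖x‖ ‖y ∧ z‖)`, with `C_v = 1` when `v` is non-archimedean and `C_v = 3`
otherwise, which after taking logarithms reads `min (δ(x,y), δ(y,z)) ≤ δ(x,z) + log C_v`.
By Artin's criterion `v` is non-archimedean as soon as `|2|_v ≤ 1`, so `log C_v` is an
`M_K`-constant; replacing the standard distance by `δ_X` costs twice the `M_K`-constant relating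
the two.
-/

noncomputable section

open scoped Classical

universe u

section AbsDefs

variable {K : Type u} [Field K] {L : Type u} [Field L]

/-- The restriction (pullback) of an absolute value along `algebraMap K L`. -/
def comapAbs [Algebra K L] (w : AbsoluteValue L ℝ) : AbsoluteValue K ℝ where
  toFun x := w (algebraMap K L x)
  map_mul' x y := by simp
  nonneg' x := w.nonneg _
  eq_zero' x := by
    rw [w.eq_zero, map_eq_zero_iff _ (algebraMap K L).injective]
  add_le' x y := by simpa using w.add_le (algebraMap K L x) (algebraMap K L y)

/-- `algebraMap K L` viewed as a ring homomorphism `WithAbs v →+* WithAbs w`. -/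
def algWithAbs [Algebra K L] (v : AbsoluteValue K ℝ) (w : AbsoluteValue L ℝ) :
    WithAbs v →+* WithAbs w :=
  ((WithAbs.equiv w).symm.toRingHom.comp (algebraMap K L)).comp
    (WithAbs.equiv v).toRingHom

/-- The induced ring homomorphism `K_v →+* L_w` between completions, when `w` extends `v`. -/
def extCompletionHom [Algebra K L] (v : AbsoluteValue K ℝ) (w : AbsoluteValue L ℝ)
    (h : ∀ x, w (algebraMap K L x) = v x) : v.Completion →+* w.Completion :=
  UniformSpace.Completion.mapRingHom (algWithAbs v w)
    (AddMonoidHomClass.isometry_of_norm (algWithAbs v w) (fun x => h x.ofAbs)).continuous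

/-- The local degree `[L_w : K_v]` of an extension `w` of `v`. -/
def localDegree [Algebra K L] (v : AbsoluteValue K ℝ) (w : AbsoluteValue L ℝ)
    (h : ∀ x, w (algebraMap K L x) = v x) : ℕ :=
  letI : Algebra v.Completion w.Completion := (extCompletionHom v w h).toAlgebra
  Module.finrank v.Completion w.Completion

/-- An absolute value is well-behaved if for every finite extension `L/K` the degree formula
`[L:K] = Σ_{w | v} [L_w : K_v]` holds. -/
def IsWellBehaved (K : Type u) [Field K] (v : AbsoluteValue K ℝ) : Prop :=
  ∀ (L : Type u) [Field L] [Algebra K L], FiniteDimensional K L →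
    (Module.finrank K L : ℕ) =
      ∑ᶠ w : {w : AbsoluteValue L ℝ // ∀ x, w (algebraMap K L x) = v x},
        localDegree v w.1 w.2

/-- Non-triviality of an absolute value. -/
def IsNontrivialAbs (v : AbsoluteValue K ℝ) : Prop := ∃ x : K, x ≠ 0 ∧ v x ≠ 1

/-- Non-archimedean absolute value. -/
def IsNonarchAbs (v : AbsoluteValue K ℝ) : Prop := ∀ x y, v (x + y) ≤ max (v x) (v y)

/-- Two absolute values are equivalent if they define the same topology; equivalently, they
have the same open unit balls. -/
def AbsEquivalent (v w : AbsoluteValue K ℝ) : Prop := ∀ x, v x < 1 ↔ w x < 1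

/-- A proper absolute value: non-trivial, well-behaved, and in characteristic zero its
restriction to `ℚ` is equivalent to the trivial, a `p`-adic, or the usual absolute value. -/
def IsProperAbs (v : AbsoluteValue K ℝ) : Prop :=
  IsNontrivialAbs v ∧ IsWellBehaved K v ∧
  ∀ (_ : CharZero K),
    (∀ q : ℚ, q ≠ 0 → ¬ v (q : K) < 1) ∨
    (∃ p : ℕ, p.Prime ∧ ∀ q : ℚ, (v (q : K) < 1 ↔ (padicNorm p q : ℝ) < 1)) ∨
    (∀ q : ℚ, v (q : K) < 1 ↔ |(q : ℝ)| < 1)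

/-- A proper set of absolute values. -/
def IsProperAbsSet (M : Set (AbsoluteValue K ℝ)) : Prop :=
  M.Nonempty ∧ (∀ v ∈ M, IsProperAbs v) ∧
  (M.Pairwise fun v w => ¬ AbsEquivalent v w) ∧
  ∀ x : K, x ≠ 0 → {v ∈ M | v x ≠ 1}.Finite

end AbsDefs

section Stmt19

variable {K : Type u} [Field K] {Kbar : Type u} [Field Kbar] [Algebra K Kbar]

/-- An `M_K`-constant: a nonnegative function on the absolute values of `K̄` extending `M_K`,
factoring through `M_K` and vanishing for all but finitely many `v₀ ∈ M_K`. -/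
def IsMKConstant [Algebra K Kbar] (M : Set (AbsoluteValue K ℝ))
    (γ : AbsoluteValue Kbar ℝ → ℝ) : Prop :=
  (∀ v, 0 ≤ γ v) ∧
  (∀ v w : AbsoluteValue Kbar ℝ, comapAbs (K := K) v = comapAbs w → γ v = γ w) ∧
  {v₀ ∈ M | ∃ v : AbsoluteValue Kbar ℝ, comapAbs v = v₀ ∧ γ v ≠ 0}.Finite

/-- Two nonzero coordinate vectors define the same point of projective space. -/
def ProjEquiv {N : ℕ} (x y : {x : Fin (N + 1) → Kbar // x ≠ 0}) : Prop :=
  ∃ c : Kbar, c ≠ 0 ∧ (fun i => c * x.1 i) = y.1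

/-- The standard local arithmetic distance function on projective `N`-space, in homogeneous
coordinates:
`δ(x,y,v) = log ((max_i |x_i|_v · max_j |y_j|_v) / max_{i,j} |x_i y_j - x_j y_i|_v)`. -/
noncomputable def deltaStd {N : ℕ} (v : AbsoluteValue Kbar ℝ)
    (x y : {x : Fin (N + 1) → Kbar // x ≠ 0}) : ℝ :=
  Real.log
    ((Finset.univ.sup' Finset.univ_nonempty (fun i => v (x.1 i)) *
      Finset.univ.sup' Finset.univ_nonempty (fun j => v (y.1 j))) /
      Finset.univ.sup' Finset.univ_nonempty
        (fun p : Fin (N + 1) × Fin (N + 1) => v (x.1 p.1 * y.1 p.2 - x.1 p.2 * y.1 p.1)))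

namespace AbsoluteValue

variable {F : Type*} [Field F] (v : AbsoluteValue F ℝ)

lemma natCast_le_one_of_charP (p : ℕ) [CharP F p] (hp : p.Prime) (n : ℕ) : v n ≤ 1 := by
  have : ExpChar F p := ExpChar.prime hp
  have hfix : v n ^ p = v n := by rw [← map_pow, ← frobenius_def, map_natCast]
  by_contra! h
  exact (lt_self_pow₀ h hp.one_lt).ne' hfix

/-- Artin's criterion. -/
lemma natCast_le_one_of_two_le_one (h2 : v 2 ≤ 1) (n : ℕ) : v n ≤ 1 := by
  obtain ⟨p, _⟩ := CharP.exists F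
  rcases CharP.char_is_prime_or_zero F p with hp | rfl
  · exact v.natCast_le_one_of_charP p hp n
  · have : CharZero F := CharP.charP_to_charZero F
    let f : AbsoluteValue ℚ ℝ := v.comp (Rat.castHom F).injective
    have hf (m : ℕ) : f m = v m := congrArg v (map_natCast (Rat.castHom F) m)
    by_contra! hn
    have hf2 := Rat.AbsoluteValue.one_lt_of_not_bounded (f := f)
      (fun hb => (hb n).not_gt (by rwa [hf])) one_lt_two
    rw [hf, Nat.cast_ofNat] at hf2
    exact hf2.not_ge h2

lemma apply_add_le_max_of_two_le_one (h2 : v 2 ≤ 1) (a b : F) :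
    v (a + b) ≤ max (v a) (v b) := by
  have : IsUltrametricDist (WithAbs v) :=
    IsUltrametricDist.isUltrametricDist_of_forall_norm_natCast_le_one
      (v.natCast_le_one_of_two_le_one h2)
  exact IsUltrametricDist.norm_add_le_max ((WithAbs.equiv v).symm a) ((WithAbs.equiv v).symm b)

def tripleSumConst : ℝ := if 1 < v 2 then 3 else 1

lemma one_le_tripleSumConst : 1 ≤ v.tripleSumConst := by
  unfold tripleSumConst
  split_ifs <;> norm_num

lemma apply_add_add_le (a b c : F) :
    v (a + b + c) ≤ v.tripleSumConst * max (v a) (max (v b) (v c)) := by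
  unfold tripleSumConst
  split_ifs with h2
  · calc v (a + b + c) ≤ v a + v b + v c := (v.add_le _ c).trans (by gcongr; exact v.add_le a b)
      _ ≤ 3 * max (v a) (max (v b) (v c)) := by
        linarith [le_max_left (v a) (max (v b) (v c)), le_max_right (v a) (max (v b) (v c)),
          le_max_left (v b) (v c), le_max_right (v b) (v c)]
  · have hu := v.apply_add_le_max_of_two_le_one (not_lt.mp h2)
    rw [one_mul, ← max_assoc]
    exact (hu _ _).trans (max_le_max_right _ (hu a b))

end AbsoluteValue

section Minors

variable {F ι : Type*} [Field F] [Fintype ι] [Nonempty ι] (v : AbsoluteValue F ℝ)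

def supNorm (x : ι → F) : ℝ :=
  Finset.univ.sup' Finset.univ_nonempty fun i => v (x i)

def minorNorm (x y : ι → F) : ℝ :=
  Finset.univ.sup' Finset.univ_nonempty fun p : ι × ι => v (x p.1 * y p.2 - x p.2 * y p.1)

lemma le_supNorm (x : ι → F) (i : ι) : v (x i) ≤ supNorm v x :=
  Finset.le_sup' (fun j => v (x j)) (Finset.mem_univ i)

lemma le_minorNorm (x y : ι → F) (i j : ι) : v (x i * y j - x j * y i) ≤ minorNorm v x y :=
  Finset.le_sup' (fun p : ι × ι => v (x p.1 * y p.2 - x p.2 * y p.1)) (Finset.mem_univ (i, j))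

lemma supNorm_nonneg (x : ι → F) : 0 ≤ supNorm v x :=
  (v.nonneg _).trans (le_supNorm v x (Classical.arbitrary ι))

lemma supNorm_pos {x : ι → F} (hx : x ≠ 0) : 0 < supNorm v x := by
  obtain ⟨i, hi⟩ := Function.ne_iff.mp hx
  exact (v.pos hi).trans_le (le_supNorm v x i)

lemma supNorm_smul (c : F) (x : ι → F) : supNorm v (c • x) = v c * supNorm v x := by
  simp only [supNorm, Finset.mul₀_sup' (v.nonneg c), Pi.smul_apply, smul_eq_mul, map_mul]

lemma minorNorm_smul_left (c : F) (x y : ι → F) :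
    minorNorm v (c • x) y = v c * minorNorm v x y := by
  simp only [minorNorm, Finset.mul₀_sup' (v.nonneg c), Pi.smul_apply, smul_eq_mul, ← map_mul,
    mul_sub, mul_assoc]

lemma minorNorm_comm (x y : ι → F) : minorNorm v x y = minorNorm v y x := by
  refine Finset.sup'_congr _ rfl fun p _ => ?_
  rw [← v.map_neg]
  congr 1
  ring

lemma supNorm_mul_minorNorm_le (x y z : ι → F) :
    supNorm v y * minorNorm v x z ≤
      v.tripleSumConst * max (supNorm v z * minorNorm v x y) (supNorm v x * minorNorm v y z) := by
  obtain ⟨k, -, hk⟩ := Finset.exists_mem_eq_sup' Finset.univ_nonempty fun i => v (y i)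
  obtain ⟨⟨i, j⟩, -, hij⟩ := Finset.exists_mem_eq_sup' Finset.univ_nonempty
    fun p : ι × ι => v (x p.1 * z p.2 - x p.2 * z p.1)
  have hexpand : y k * (x i * z j - x j * z i) =
      z j * (x i * y k - x k * y i) + -z i * (x j * y k - x k * y j) +
        x k * (y i * z j - y j * z i) := by ring
  have hz := supNorm_nonneg v z
  have hx := supNorm_nonneg v x
  calc supNorm v y * minorNorm v x z = v (y k * (x i * z j - x j * z i)) := by
        rw [supNorm, minorNorm, hk, hij, map_mul]
    _ ≤ _ := by
      rw [hexpand]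
      refine (v.apply_add_add_le _ _ _).trans
        (mul_le_mul_of_nonneg_left ?_ (zero_le_one.trans v.one_le_tripleSumConst))
      simp only [map_mul, v.map_neg]
      refine max_le (le_max_of_le_left ?_) (max_le (le_max_of_le_left ?_) (le_max_of_le_right ?_))
      · exact mul_le_mul (le_supNorm v z j) (le_minorNorm v x y i k) (v.nonneg _) hz
      · exact mul_le_mul (le_supNorm v z i) (le_minorNorm v x y j k) (v.nonneg _) hz
      · exact mul_le_mul (le_supNorm v x k) (le_minorNorm v y z i j) (v.nonneg _) hx

end Minors

section ProjectiveDistance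

variable {F : Type*} [Field F] (v : AbsoluteValue F ℝ) {N : ℕ}

lemma deltaStd_eq_log (x y : {x : Fin (N + 1) → F // x ≠ 0}) :
    deltaStd v x y = Real.log (supNorm v x.1 * supNorm v y.1 / minorNorm v x.1 y.1) := rfl

lemma projEquiv_iff_exists_smul {x y : {x : Fin (N + 1) → F // x ≠ 0}} :
    ProjEquiv x y ↔ ∃ c : F, c ≠ 0 ∧ c • x.1 = y.1 := Iff.rfl

lemma ProjEquiv.symm {x y : {x : Fin (N + 1) → F // x ≠ 0}} (h : ProjEquiv x y) :
    ProjEquiv y x := by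
  obtain ⟨c, hc, hcxy⟩ := projEquiv_iff_exists_smul.mp h
  exact projEquiv_iff_exists_smul.mpr ⟨c⁻¹, inv_ne_zero hc, by rw [← hcxy, inv_smul_smul₀ hc]⟩

lemma ProjEquiv.trans {x y z : {x : Fin (N + 1) → F // x ≠ 0}}
    (hxy : ProjEquiv x y) (hyz : ProjEquiv y z) : ProjEquiv x z := by
  obtain ⟨c, hc, hcxy⟩ := projEquiv_iff_exists_smul.mp hxy
  obtain ⟨d, hd, hdyz⟩ := projEquiv_iff_exists_smul.mp hyz
  exact projEquiv_iff_exists_smul.mpr ⟨d * c, mul_ne_zero hd hc, by rw [mul_smul, hcxy, hdyz]⟩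

lemma projEquiv_of_minors_eq_zero {x y : {x : Fin (N + 1) → F // x ≠ 0}}
    (h : ∀ i j, x.1 i * y.1 j - x.1 j * y.1 i = 0) : ProjEquiv x y := by
  have hmin (i j : Fin (N + 1)) : x.1 i * y.1 j = x.1 j * y.1 i := sub_eq_zero.mp (h i j)
  obtain ⟨k, hk⟩ : ∃ k, x.1 k ≠ 0 := Function.ne_iff.mp x.2
  have hyk : y.1 k ≠ 0 := by
    intro hyk
    refine y.2 (funext fun i => ?_)
    simpa [hyk, hk] using hmin k i
  refine ⟨y.1 k / x.1 k, div_ne_zero hyk hk, funext fun i => ?_⟩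
  field_simp
  linear_combination -hmin k i

lemma minorNorm_pos {x y : {x : Fin (N + 1) → F // x ≠ 0}} (h : ¬ ProjEquiv x y) :
    0 < minorNorm v x.1 y.1 := by
  obtain ⟨i, j, hij⟩ : ∃ i j, x.1 i * y.1 j - x.1 j * y.1 i ≠ 0 := by
    by_contra! hzero
    exact h (projEquiv_of_minors_eq_zero hzero)
  exact (v.pos hij).trans_le (le_minorNorm v x.1 y.1 i j)

lemma deltaStd_congr_left {x x' : {x : Fin (N + 1) → F // x ≠ 0}} (h : ProjEquiv x x')
    (y : {x : Fin (N + 1) → F // x ≠ 0}) : deltaStd v x' y = deltaStd v x y := by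
  obtain ⟨c, hc, hx'⟩ := projEquiv_iff_exists_smul.mp h
  rw [deltaStd_eq_log, deltaStd_eq_log, ← hx', supNorm_smul, minorNorm_smul_left, mul_assoc,
    mul_div_mul_left _ _ (v.ne_zero hc)]

lemma deltaStd_comm (x y : {x : Fin (N + 1) → F // x ≠ 0}) :
    deltaStd v x y = deltaStd v y x := by
  rw [deltaStd_eq_log, deltaStd_eq_log, mul_comm (supNorm v x.1), minorNorm_comm]

lemma deltaStd_congr_right {y y' : {x : Fin (N + 1) → F // x ≠ 0}} (h : ProjEquiv y y')
    (x : {x : Fin (N + 1) → F // x ≠ 0}) : deltaStd v x y' = deltaStd v x y := by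
  rw [deltaStd_comm v x y', deltaStd_congr_left v h x, deltaStd_comm]

lemma min_deltaStd_le {x y z : {x : Fin (N + 1) → F // x ≠ 0}}
    (hxy : ¬ ProjEquiv x y) (hyz : ¬ ProjEquiv y z) (hxz : ¬ ProjEquiv x z) :
    min (deltaStd v x y) (deltaStd v y z) ≤ deltaStd v x z + Real.log v.tripleSumConst := by
  set C := v.tripleSumConst
  have hC : 0 < C := zero_lt_one.trans_le v.one_le_tripleSumConst
  have hx := supNorm_pos v x.2
  have hy := supNorm_pos v y.2
  have hz := supNorm_pos v z.2
  have hmxy := minorNorm_pos v hxy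
  have hmyz := minorNorm_pos v hyz
  have hmxz := minorNorm_pos v hxz
  rw [deltaStd_eq_log, deltaStd_eq_log, deltaStd_eq_log, ← Real.log_mul (by positivity) hC.ne']
  have hkey := supNorm_mul_minorNorm_le v x.1 y.1 z.1
  rw [mul_max_of_nonneg _ _ hC.le, le_max_iff] at hkey
  rcases hkey with hkey | hkey
  · refine (min_le_left _ _).trans (Real.log_le_log (by positivity) ?_)
    rw [div_mul_eq_mul_div, div_le_div_iff₀ hmxy hmxz]
    nlinarith
  · refine (min_le_right _ _).trans (Real.log_le_log (by positivity) ?_)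
    rw [div_mul_eq_mul_div, div_le_div_iff₀ hmyz hmxz]
    nlinarith

/-- On the diagonal `deltaStd` is a junk value (a logarithm of `_ / 0`); the arithmetic distance
is `⊤` there. -/
def deltaStdTop (x y : {x : Fin (N + 1) → F // x ≠ 0}) : EReal :=
  if ProjEquiv x y then ⊤ else (deltaStd v x y : EReal)

lemma min_deltaStdTop_le (x y z : {x : Fin (N + 1) → F // x ≠ 0}) :
    min (deltaStdTop v x y) (deltaStdTop v y z) ≤
      deltaStdTop v x z + (Real.log v.tripleSumConst : EReal) := by
  have hlogC : 0 ≤ Real.log v.tripleSumConst := Real.log_nonneg v.one_le_tripleSumConst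
  by_cases hxz : ProjEquiv x z
  · simp [deltaStdTop, hxz]
  by_cases hxy : ProjEquiv x y
  · have hyz : ¬ ProjEquiv y z := fun hyz => hxz (hxy.trans hyz)
    simp only [deltaStdTop, hxy, hyz, hxz, if_true, if_false, min_eq_right le_top,
      deltaStd_congr_left v hxy z]
    exact_mod_cast le_add_of_nonneg_right hlogC
  by_cases hyz : ProjEquiv y z
  · simp only [deltaStdTop, hxy, hyz, hxz, if_true, if_false, min_eq_left le_top,
      deltaStd_congr_right v hyz.symm x]
    exact_mod_cast le_add_of_nonneg_right hlogC
  have hreal := min_deltaStd_le v hxy hyz hxz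
  simp only [deltaStdTop, hxy, hyz, hxz, if_false]
  rw [min_le_iff] at hreal ⊢
  exact_mod_cast hreal

lemma le_deltaStdTop_add_and_deltaStdTop_le_add {x y : {x : Fin (N + 1) → F // x ≠ 0}}
    {e : EReal} {γ : ℝ} (htop : ProjEquiv x y → e = ⊤)
    (hclose : ¬ ProjEquiv x y → ∃ d : ℝ, e = d ∧ |d - deltaStd v x y| ≤ γ) :
    e ≤ deltaStdTop v x y + γ ∧ deltaStdTop v x y ≤ e + γ := by
  by_cases h : ProjEquiv x y
  · simp [deltaStdTop, h, htop h]
  obtain ⟨d, rfl, hd⟩ := hclose h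
  obtain ⟨hd₁, hd₂⟩ := abs_sub_le_iff.mp hd
  simp only [deltaStdTop, h, if_false]
  constructor <;> norm_cast <;> linarith

end ProjectiveDistance

lemma comapAbs_two (v : AbsoluteValue Kbar ℝ) : comapAbs (K := K) v 2 = v 2 :=
  congrArg v (map_ofNat (algebraMap K Kbar) 2)

namespace IsMKConstant

variable {M : Set (AbsoluteValue K ℝ)} {γ γ' : AbsoluteValue Kbar ℝ → ℝ}

lemma add (h : IsMKConstant M γ) (h' : IsMKConstant M γ') : IsMKConstant M (γ + γ') := by
  obtain ⟨hnonneg, hfactor, hfinite⟩ := h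
  obtain ⟨hnonneg', hfactor', hfinite'⟩ := h'
  refine ⟨fun v => add_nonneg (hnonneg v) (hnonneg' v),
    fun v w hvw => by simp only [Pi.add_apply, hfactor v w hvw, hfactor' v w hvw],
    (hfinite.union hfinite').subset ?_⟩
  rintro v₀ ⟨hv₀, v, rfl, hv⟩
  by_cases hγv : γ v = 0
  · exact Or.inr ⟨hv₀, v, rfl, by simpa [hγv] using hv⟩
  · exact Or.inl ⟨hv₀, v, rfl, hγv⟩

end IsMKConstant

/-- `log v.tripleSumConst` is nonzero only at archimedean places, and those lie over the finitely
many `v₀ ∈ M` with `v₀ 2 ≠ 1`. -/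
lemma isMKConstant_log_tripleSumConst {M : Set (AbsoluteValue K ℝ)}
    (hM : ∀ x : K, x ≠ 0 → {v ∈ M | v x ≠ 1}.Finite) :
    IsMKConstant M fun v : AbsoluteValue Kbar ℝ => Real.log v.tripleSumConst := by
  refine ⟨fun v => Real.log_nonneg v.one_le_tripleSumConst, fun v w hvw => ?_, ?_⟩
  · have h2 : v 2 = w 2 := by rw [← comapAbs_two (K := K), hvw, comapAbs_two]
    simp only [AbsoluteValue.tripleSumConst, h2]
  · have harch : {v₀ ∈ M | 1 < v₀ 2}.Finite := by
      by_cases h2 : (2 : K) = 0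
      · simp only [h2, map_zero]
        norm_num
      · exact (hM 2 h2).subset fun v₀ ⟨hv₀, h⟩ => ⟨hv₀, h.ne'⟩
    refine harch.subset ?_
    rintro v₀ ⟨hv₀, v, rfl, hv⟩
    refine ⟨hv₀, ?_⟩
    rw [comapAbs_two]
    by_contra! h
    simp [AbsoluteValue.tripleSumConst, not_lt.mpr h] at hv

theorem stmt_19_general (M : Set (AbsoluteValue K ℝ)) (hM : IsProperAbsSet M) (N : ℕ)
    (S : Set {x : Fin (N + 1) → Kbar // x ≠ 0})
    (δ : {x : Fin (N + 1) → Kbar // x ≠ 0} → {x : Fin (N + 1) → Kbar // x ≠ 0} →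
      AbsoluteValue Kbar ℝ → EReal)
    (hδ : ∃ γ₀ : AbsoluteValue Kbar ℝ → ℝ, IsMKConstant M γ₀ ∧
      ∀ v : AbsoluteValue Kbar ℝ, comapAbs v ∈ M →
        ∀ x ∈ S, ∀ y ∈ S,
          (ProjEquiv x y → δ x y v = ⊤) ∧
          (¬ ProjEquiv x y → ∃ d : ℝ, δ x y v = (d : EReal) ∧
            |d - deltaStd v x y| ≤ γ₀ v)) :
    ∃ γ : AbsoluteValue Kbar ℝ → ℝ, IsMKConstant M γ ∧
      ∀ v : AbsoluteValue Kbar ℝ, comapAbs v ∈ M →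
        ∀ x ∈ S, ∀ y ∈ S, ∀ z ∈ S,
          min (δ x y v) (δ y z v) ≤ δ x z v + ((γ v : ℝ) : EReal) := by
  obtain ⟨γ₀, hγ₀, hδγ₀⟩ := hδ
  refine ⟨γ₀ + γ₀ + fun v => Real.log v.tripleSumConst,
    (hγ₀.add hγ₀).add (isMKConstant_log_tripleSumConst hM.2.2.2), ?_⟩
  intro v hv x hx y hy z hz
  have hclose (a) (ha : a ∈ S) (b) (hb : b ∈ S) :=
    le_deltaStdTop_add_and_deltaStdTop_le_add v (hδγ₀ v hv a ha b hb).1 (hδγ₀ v hv a ha b hb).2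
  set D := deltaStdTop v (N := N)
  calc min (δ x y v) (δ y z v) ≤ min (D x y + γ₀ v) (D y z + γ₀ v) :=
        min_le_min (hclose x hx y hy).1 (hclose y hy z hz).1
    _ = min (D x y) (D y z) + γ₀ v := min_add_add_right _ _ _
    _ ≤ D x z + Real.log v.tripleSumConst + γ₀ v := by gcongr; exact min_deltaStdTop_le v x y z
    _ ≤ δ x z v + γ₀ v + Real.log v.tripleSumConst + γ₀ v := by gcongr; exact (hclose x hx z hz).2
    _ = δ x z v + ((γ₀ v + γ₀ v + Real.log v.tripleSumConst : ℝ) : EReal) := by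
        simp only [EReal.coe_add]
        abel

/-- Triangle inequality I for the arithmetic distance function: let `X` be a
projective scheme over `K̄`, with points `X(K̄) = S` realized in projective `N`-space via a
projective embedding, and let `δ_X` be an arithmetic distance function on `X`, i.e. any
function agreeing, up to an `M_K`-constant, with the standard arithmetic distance off the
diagonal and equal to `∞` on the diagonal. Then there is an `M_K`-constant `γ` such that
`δ_X(x,z,v) + γ(v) ≥ min {δ_X(x,y,v), δ_X(y,z,v)}` for all `x, y, z ∈ X(K̄)` and all
`v ∈ M(K̄)`. -/
theorem stmt_19 (M : Set (AbsoluteValue K ℝ)) (hM : IsProperAbsSet M)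
    [IsAlgClosure K Kbar] (N : ℕ)
    (S : Set {x : Fin (N + 1) → Kbar // x ≠ 0})
    (δ : {x : Fin (N + 1) → Kbar // x ≠ 0} → {x : Fin (N + 1) → Kbar // x ≠ 0} →
      AbsoluteValue Kbar ℝ → EReal)
    (hδ : ∃ γ₀ : AbsoluteValue Kbar ℝ → ℝ, IsMKConstant M γ₀ ∧
      ∀ v : AbsoluteValue Kbar ℝ, comapAbs v ∈ M →
        ∀ x ∈ S, ∀ y ∈ S,
          (ProjEquiv x y → δ x y v = ⊤) ∧
          (¬ ProjEquiv x y → ∃ d : ℝ, δ x y v = (d : EReal) ∧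
            |d - deltaStd v x y| ≤ γ₀ v)) :
    ∃ γ : AbsoluteValue Kbar ℝ → ℝ, IsMKConstant M γ ∧
      ∀ v : AbsoluteValue Kbar ℝ, comapAbs v ∈ M →
        ∀ x ∈ S, ∀ y ∈ S, ∀ z ∈ S,
          min (δ x y v) (δ y z v) ≤ δ x z v + ((γ v : ℝ) : EReal) :=
  stmt_19_general M hM N S δ hδ

end Stmt19
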